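/- For every β > 0, the integral over ℝ³ minus the unit ball of s_β⁶, where s_β(r) = √((β²+1)/(β²+r²)), equals (π/2)·(−β + β⁵ + (1+β²)³·arctan(β))/β³. -/

import Mathlib

open MeasureTheory Real Set Filter Topology Metric

/-!
In polar coordinates the integral is `4π (β²+1)³ ∫₁^∞ r² / (β²+r²)³ dr`. The integrand has an
elementary antiderivative tending to `π / (16 β³)` at infinity, and `arctan (1/β) = π/2 - arctan β`
turns its value at `1` into the closed form.
-/

theorem setIntegral_le_norm_fun_norm_addHaar {E F : Type*} [NormedAddCommGroup E] [NormedSpace ℝ E]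
    [Nontrivial E] [FiniteDimensional ℝ E] [MeasurableSpace E] [BorelSpace E] [NormedAddCommGroup F]
    [NormedSpace ℝ F] (μ : Measure E) [μ.IsAddHaarMeasure] {R : ℝ} (hR : 0 ≤ R) (f : ℝ → F) :
    ∫ x in {x : E | R ≤ ‖x‖}, f ‖x‖ ∂μ = Module.finrank ℝ E • μ.real (ball 0 1) •
      ∫ r in Ioi R, r ^ (Module.finrank ℝ E - 1) • f r := by
  have hset : {x : E | R ≤ ‖x‖} = (‖·‖) ⁻¹' Ici R := rfl
  have hind : ((‖·‖) ⁻¹' Ici R).indicator (fun x : E => f ‖x‖) = fun x => (Ici R).indicator f ‖x‖ :=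
    funext fun _ => indicator_comp_right _
  rw [hset, ← integral_indicator (measurableSet_Ici.preimage measurable_norm), hind,
    integral_fun_norm_addHaar μ ((Ici R).indicator f)]
  congr 2
  calc ∫ r in Ioi 0, r ^ (Module.finrank ℝ E - 1) • (Ici R).indicator f r
      = ∫ r in Ioi 0, (Ici R).indicator (fun r => r ^ (Module.finrank ℝ E - 1) • f r) r := by
        simp only [indicator_smul_apply]
    _ = ∫ r in Ioi 0 ∩ Ioi R, r ^ (Module.finrank ℝ E - 1) • f r := by
        rw [setIntegral_indicator measurableSet_Ici]
        exact setIntegral_congr_set ((ae_eq_refl _).inter Ioi_ae_eq_Ici.symm)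
    _ = _ := by rw [inter_eq_right.mpr (Ioi_subset_Ioi hR)]

noncomputable def sqDivCubePrimitive (β r : ℝ) : ℝ :=
  -r / (4 * (β ^ 2 + r ^ 2) ^ 2) + r / (8 * β ^ 2 * (β ^ 2 + r ^ 2)) + arctan (r / β) / (8 * β ^ 3)

theorem hasDerivAt_sqDivCubePrimitive {β : ℝ} (hβ : β ≠ 0) (r : ℝ) :
    HasDerivAt (sqDivCubePrimitive β) (r ^ 2 / (β ^ 2 + r ^ 2) ^ 3) r := by
  have hq : HasDerivAt (fun r => β ^ 2 + r ^ 2) (2 * r) r := by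
    simpa using (hasDerivAt_pow 2 r).const_add (β ^ 2)
  have h₁ := (hasDerivAt_neg' r).fun_div ((hq.fun_pow 2).const_mul 4) (by positivity)
  have h₂ := (hasDerivAt_id' r).fun_div (hq.const_mul (8 * β ^ 2)) (by positivity)
  have h₃ := ((hasDerivAt_arctan _).comp r ((hasDerivAt_id' r).div_const β)).div_const (8 * β ^ 3)
  refine ((h₁.add h₂).add h₃).congr_deriv ?_
  field_simp
  ring

theorem tendsto_div_sq_add_sq_atTop (β : ℝ) :
    Tendsto (fun r : ℝ => r / (β ^ 2 + r ^ 2)) atTop (𝓝 0) := by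
  refine tendsto_of_tendsto_of_tendsto_of_le_of_le' tendsto_const_nhds tendsto_inv_atTop_zero ?_ ?_
  all_goals filter_upwards [eventually_gt_atTop 0] with r hr
  · positivity
  · rw [div_le_iff₀ (by positivity), inv_mul_eq_div, le_div_iff₀ hr]
    nlinarith [sq_nonneg β]

theorem tendsto_sqDivCubePrimitive_atTop {β : ℝ} (hβ : 0 < β) :
    Tendsto (sqDivCubePrimitive β) atTop (𝓝 (π / (16 * β ^ 3))) := by
  have hratio := tendsto_div_sq_add_sq_atTop β
  have harctan : Tendsto (fun r => arctan (r / β)) atTop (𝓝 (π / 2)) :=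
    tendsto_nhds_of_tendsto_nhdsWithin (tendsto_arctan_atTop.comp (tendsto_id.atTop_div_const hβ))
  have hlim := (((tendsto_inv_atTop_zero.mul (hratio.pow 2)).const_mul (-1 / 4)).add
    (hratio.div_const (8 * β ^ 2))).add (harctan.div_const (8 * β ^ 3))
  convert hlim.congr' ?_ using 2
  · ring
  · filter_upwards [eventually_gt_atTop 0] with r hr
    unfold sqDivCubePrimitive
    field_simp

theorem integral_Ioi_sq_div_sq_add_sq_pow_three {β : ℝ} (hβ : 0 < β) (a : ℝ) :
    ∫ r in Ioi a, r ^ 2 / (β ^ 2 + r ^ 2) ^ 3 = π / (16 * β ^ 3) - sqDivCubePrimitive β a :=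
  integral_Ioi_of_hasDerivAt_of_nonneg' (fun r _ => hasDerivAt_sqDivCubePrimitive hβ.ne' r)
    (fun r _ => by positivity) (tendsto_sqDivCubePrimitive_atTop hβ)

/-- For every β > 0, the integral over ℝ³ minus the unit ball of `s_β⁶`,
where `s_β(x) = √((β²+1)/(β²+|x|²))`, equals
`(π/2)·(−β + β⁵ + (1+β²)³·arctan β)/β³`. -/
theorem stmt1 (β : ℝ) (hβ : 0 < β) :
    (∫ x in {x : EuclideanSpace ℝ (Fin 3) | 1 ≤ ‖x‖},
      (Real.sqrt ((β ^ 2 + 1) / (β ^ 2 + ‖x‖ ^ 2))) ^ 6) =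
      (π / 2) * ((-β + β ^ 5 + (1 + β ^ 2) ^ 3 * Real.arctan β) / β ^ 3) := by
  have hsqrt : ∀ t : ℝ, √((β ^ 2 + 1) / (β ^ 2 + t ^ 2)) ^ 6 = ((β ^ 2 + 1) / (β ^ 2 + t ^ 2)) ^ 3 :=
    fun t => by rw [show 6 = 2 * 3 from rfl, pow_mul, sq_sqrt (by positivity)]
  have hradial : ∫ r in Ioi (1 : ℝ), r ^ 2 • ((β ^ 2 + 1) / (β ^ 2 + r ^ 2)) ^ 3 =
      (β ^ 2 + 1) ^ 3 * ∫ r in Ioi (1 : ℝ), r ^ 2 / (β ^ 2 + r ^ 2) ^ 3 := by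
    rw [← integral_const_mul]
    congr 1 with r
    rw [smul_eq_mul, div_pow]
    ring
  simp_rw [hsqrt]
  rw [setIntegral_le_norm_fun_norm_addHaar volume zero_le_one
      (fun r => ((β ^ 2 + 1) / (β ^ 2 + r ^ 2)) ^ 3),
    finrank_euclideanSpace_fin, measureReal_def, EuclideanSpace.volume_ball_fin_three, hradial,
    integral_Ioi_sq_div_sq_add_sq_pow_three hβ, sqDivCubePrimitive, one_div β, arctan_inv_of_pos hβ]
  simp only [ENNReal.ofReal_one, one_pow, one_mul,
    ENNReal.toReal_ofReal (by positivity : 0 ≤ π * 4 / 3), nsmul_eq_mul, smul_eq_mul]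
  field_simp
  ring
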